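/- Let w be a design with nonsingular M(w) that is not D-optimal, and let u ∈ argmin{d_x(w) : x ∈ supp(w)}, v ∈ argmax{d_x(w) : x ∈ {1,…,n}} be the Böhning pair. Then the optimal exchange step α* maximizing det M(w + α(e_v − e_u)) over [−w_v, w_u] is strictly positive, and det M(T(w)) > det M(w) for the resulting design T(w) = w + α*(e_v − e_u). -/

import Mathlib

open Matrix

lemma trace_mul_vecMulVec {m : ℕ} (X : Matrix (Fin m) (Fin m) ℝ) (a b : Fin m → ℝ) :
    (X * vecMulVec a b).trace = b ⬝ᵥ X *ᵥ a := by
  simp only [trace, diag_apply, mul_apply, vecMulVec_apply, dotProduct, mulVec,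
    Finset.mul_sum]
  exact Finset.sum_congr rfl fun i _ => Finset.sum_congr rfl fun j _ => by ring

lemma sum_smul_vecMulVec_mulVec {m n : ℕ} (f : Fin n → Fin m → ℝ) (w : Fin n → ℝ)
    (x : Fin m → ℝ) :
    (∑ y, w y • vecMulVec (f y) (f y)) *ᵥ x = ∑ y, (w y * (f y ⬝ᵥ x)) • f y := by
  ext i
  simp only [mulVec, dotProduct, Matrix.sum_apply, Matrix.smul_apply, vecMulVec_apply,
    smul_eq_mul, Finset.sum_apply, Pi.smul_apply, Finset.mul_sum, Finset.sum_mul]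
  rw [Finset.sum_comm]
  exact Finset.sum_congr rfl fun y _ => Finset.sum_congr rfl fun j _ => by ring

lemma psd_sum {m n : ℕ} (f : Fin n → Fin m → ℝ) (w : Fin n → ℝ) (hw : ∀ x, 0 ≤ w x) :
    (∑ x, w x • vecMulVec (f x) (f x)).PosSemidef := by
  refine posSemidef_iff_dotProduct_mulVec.mpr ⟨?_, ?_⟩
  · show _ = _
    ext i j
    simp only [conjTranspose_apply, Matrix.sum_apply, Matrix.smul_apply, vecMulVec_apply,
      smul_eq_mul, star_sum, star_mul', RCLike.star_def, conj_trivial]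
    exact Finset.sum_congr rfl fun x _ => by ring
  · intro x
    rw [sum_smul_vecMulVec_mulVec]
    have hx : ∀ y : Fin n, star x ⬝ᵥ (w y * (f y ⬝ᵥ x)) • f y = w y * ((f y ⬝ᵥ x) * (f y ⬝ᵥ x)) := by
      intro y
      simp only [star_trivial, dotProduct, Pi.smul_apply, smul_eq_mul, Finset.mul_sum,
        Finset.sum_mul]
      rw [Finset.sum_comm]
      exact Finset.sum_congr rfl fun i _ => Finset.sum_congr rfl fun j _ => by ring
    have : star x ⬝ᵥ (∑ y, (w y * (f y ⬝ᵥ x)) • f y) = ∑ y, w y * ((f y ⬝ᵥ x) * (f y ⬝ᵥ x)) := by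
      simp only [dotProduct, Finset.sum_apply, Finset.mul_sum]
      rw [Finset.sum_comm]
      refine Finset.sum_congr rfl fun y _ => ?_
      have := hx y
      simpa only [star_trivial, dotProduct, Pi.smul_apply, smul_eq_mul, Finset.mul_sum,
        Finset.sum_mul] using this
    rw [this]
    exact Finset.sum_nonneg fun y _ => mul_nonneg (hw y) (mul_self_nonneg _)

lemma psd_det_pos {m : ℕ} {M : Matrix (Fin m) (Fin m) ℝ} (h : M.PosSemidef)
    (hd : M.det ≠ 0) : 0 < M.det := by
  rw [h.1.det_eq_prod_eigenvalues] at hd ⊢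
  refine Finset.prod_pos fun i _ => ?_
  rcases lt_or_eq_of_le (h.eigenvalues_nonneg i) with hlt | heq
  · exact_mod_cast hlt
  · exact absurd (Finset.prod_eq_zero (Finset.mem_univ i) (by exact_mod_cast heq.symm)) hd

lemma herm_trace_eq_sum {m : ℕ} {M : Matrix (Fin m) (Fin m) ℝ} (h : M.IsHermitian) :
    M.trace = ∑ i, h.eigenvalues i := by
  conv_lhs => rw [h.spectral_theorem, Unitary.conjStarAlgAut_apply]
  rw [trace_mul_cycle]
  have h1 : (star (h.eigenvectorUnitary : Matrix (Fin m) (Fin m) ℝ)) *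
      (h.eigenvectorUnitary : Matrix (Fin m) (Fin m) ℝ) = 1 :=
    mem_unitaryGroup_iff'.mp h.eigenvectorUnitary.2
  rw [h1, one_mul, trace_diagonal]
  simp

lemma psd_det_le_trace_pow {m : ℕ} (hm : 0 < m) {C : Matrix (Fin m) (Fin m) ℝ}
    (hC : C.PosSemidef) : C.det ≤ (C.trace / m) ^ m := by
  have hev := hC.eigenvalues_nonneg
  have hdet : C.det = ∏ i, hC.1.eigenvalues i := by
    rw [hC.1.det_eq_prod_eigenvalues]; norm_num
  have htr : C.trace = ∑ i, hC.1.eigenvalues i := herm_trace_eq_sum hC.1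
  rw [hdet, htr]
  set z := hC.1.eigenvalues
  have hmr : (0:ℝ) < m := by exact_mod_cast hm
  have hgm := Real.geom_mean_le_arith_mean_weighted Finset.univ (fun _ => (m:ℝ)⁻¹) z
    (fun i _ => by positivity) (by simp [Finset.card_univ]; field_simp) (fun i _ => hev i)
  have hprod : ∏ i, z i ^ ((m:ℝ)⁻¹) = (∏ i, z i) ^ ((m:ℝ)⁻¹) :=
    Real.finset_prod_rpow Finset.univ z (fun i _ => hev i) _
  rw [hprod] at hgm
  have hsum : ∑ i, (m:ℝ)⁻¹ * z i = (∑ i, z i) / m := by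
    rw [← Finset.mul_sum]; ring
  rw [hsum] at hgm
  have hprodnn : 0 ≤ ∏ i, z i := Finset.prod_nonneg fun i _ => hev i
  calc ∏ i, z i = ((∏ i, z i) ^ ((m:ℝ)⁻¹)) ^ m := by
        rw [Real.rpow_inv_natCast_pow hprodnn hm.ne']
    _ ≤ ((∑ i, z i) / m) ^ m := by
        apply pow_le_pow_left₀ (Real.rpow_nonneg hprodnn _) hgm

lemma det_rank_two_update {m : ℕ} (M : Matrix (Fin m) (Fin m) ℝ) (hM : IsUnit M.det)
    (a b : Fin m → ℝ) (α : ℝ) :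
    (M + α • vecMulVec a a - α • vecMulVec b b).det
      = M.det * ((1 + α * (a ⬝ᵥ M⁻¹ *ᵥ a)) * (1 - α * (b ⬝ᵥ M⁻¹ *ᵥ b))
          + α ^ 2 * (b ⬝ᵥ M⁻¹ *ᵥ a) * (a ⬝ᵥ M⁻¹ *ᵥ b)) := by
  set A : Matrix (Fin m) (Fin 2) ℝ := Matrix.of (fun k j => if j = 0 then a k else b k) with hA
  set B : Matrix (Fin 2) (Fin m) ℝ :=
    Matrix.of (fun j k => if j = 0 then α * a k else -α * b k) with hB
  have hAB : α • vecMulVec a a - α • vecMulVec b b = A * B := by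
    ext k l
    simp [hA, hB, mul_apply, Fin.sum_univ_two, vecMulVec_apply]
    ring
  have hsplit : M + α • vecMulVec a a - α • vecMulVec b b = M * (1 + M⁻¹ * A * B) := by
    rw [add_sub_assoc, hAB]
    rw [mul_add, mul_one]
    congr 1
    rw [← Matrix.mul_assoc, ← Matrix.mul_assoc, mul_nonsing_inv _ hM, Matrix.one_mul]
  rw [hsplit, det_mul, det_one_add_mul_comm (M⁻¹ * A) B, det_fin_two]
  have e00 : (B * (M⁻¹ * A)) 0 0 = α * (a ⬝ᵥ M⁻¹ *ᵥ a) := by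
    simp [hA, hB, mul_apply, dotProduct, mulVec, Finset.mul_sum]
    exact Finset.sum_congr rfl fun i _ => Finset.sum_congr rfl fun j _ => by ring
  have e01 : (B * (M⁻¹ * A)) 0 1 = α * (a ⬝ᵥ M⁻¹ *ᵥ b) := by
    simp [hA, hB, mul_apply, dotProduct, mulVec, Finset.mul_sum]
    exact Finset.sum_congr rfl fun i _ => Finset.sum_congr rfl fun j _ => by ring
  have e10 : (B * (M⁻¹ * A)) 1 0 = -α * (b ⬝ᵥ M⁻¹ *ᵥ a) := by
    simp [hA, hB, mul_apply, dotProduct, mulVec, Finset.mul_sum]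
    exact Finset.sum_congr rfl fun i _ => Finset.sum_congr rfl fun j _ => by ring
  have e11 : (B * (M⁻¹ * A)) 1 1 = -α * (b ⬝ᵥ M⁻¹ *ᵥ b) := by
    simp [hA, hB, mul_apply, dotProduct, mulVec, Finset.mul_sum]
    exact Finset.sum_congr rfl fun i _ => Finset.sum_congr rfl fun j _ => by ring
  simp only [Matrix.add_apply, Matrix.one_apply, e00, e01, e10, e11]
  congr 1
  norm_num
  ring

lemma psd_cauchy_schwarz {m : ℕ} {N : Matrix (Fin m) (Fin m) ℝ} (hN : N.PosSemidef)
    (a b : Fin m → ℝ) :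
    (b ⬝ᵥ N *ᵥ a) * (a ⬝ᵥ N *ᵥ b) ≤ (a ⬝ᵥ N *ᵥ a) * (b ⬝ᵥ N *ᵥ b) := by
  set p := b ⬝ᵥ N *ᵥ a
  set q := a ⬝ᵥ N *ᵥ b
  set A := a ⬝ᵥ N *ᵥ a
  set B := b ⬝ᵥ N *ᵥ b
  have key : ∀ t : ℝ, 0 ≤ B * (t * t) + (p + q) * t + A := by
    intro t
    have h := hN.dotProduct_mulVec_nonneg (a + t • b)
    simp only [star_trivial, mulVec_add, mulVec_smul, dotProduct_add, add_dotProduct,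
      dotProduct_smul, smul_dotProduct, smul_eq_mul] at h
    calc (0:ℝ) ≤ _ := h
      _ = B * (t * t) + (p + q) * t + A := by simp only [p, q, A, B]; ring
  have hdisc := discrim_le_zero key
  rw [discrim] at hdisc
  nlinarith [sq_nonneg (p - q)]

open scoped MatrixOrder in
lemma det_le_of_bounded_d {m n : ℕ} (hm : 0 < m) (f : Fin n → Fin m → ℝ)
    (M : Matrix (Fin m) (Fin m) ℝ) (hpsd : M.PosSemidef) (hdet : M.det ≠ 0)
    (hd : ∀ x, f x ⬝ᵥ M⁻¹ *ᵥ f x ≤ (m : ℝ))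
    (w' : Fin n → ℝ) (hw0 : ∀ x, 0 ≤ w' x) (hw1 : ∑ x, w' x = 1) :
    (∑ x, w' x • vecMulVec (f x) (f x)).det ≤ M.det := by
  have hMinv : M⁻¹.PosSemidef := hpsd.inv
  set S := CFC.sqrt M⁻¹ with hSdef
  have hS : S.PosSemidef := Matrix.nonneg_iff_posSemidef.mp (CFC.sqrt_nonneg M⁻¹)
  have hSS : S * S = M⁻¹ := CFC.sqrt_mul_sqrt_self M⁻¹ hMinv.nonneg
  set N := ∑ x, w' x • vecMulVec (f x) (f x) with hNdef
  have hN : N.PosSemidef := psd_sum f w' hw0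
  have hC : (S * N * S).PosSemidef := by
    have := hN.mul_mul_conjTranspose_same S
    rwa [hS.1] at this
  have hd0 : ∀ x, 0 ≤ f x ⬝ᵥ M⁻¹ *ᵥ f x := by
    intro x
    simpa using hMinv.dotProduct_mulVec_nonneg (f x)
  have htrace : (S * N * S).trace = ∑ x, w' x * (f x ⬝ᵥ M⁻¹ *ᵥ f x) := by
    rw [trace_mul_cycle, hSS]
    have : M⁻¹ * N = ∑ x, w' x • (M⁻¹ * vecMulVec (f x) (f x)) := by
      rw [hNdef, Finset.mul_sum]
      exact Finset.sum_congr rfl fun x _ => (mul_smul_comm _ _ _)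
    rw [this, trace_sum]
    exact Finset.sum_congr rfl fun x _ => by
      rw [trace_smul, trace_mul_vecMulVec, smul_eq_mul]
  have htr_le : (S * N * S).trace ≤ (m : ℝ) := by
    rw [htrace]
    calc ∑ x, w' x * (f x ⬝ᵥ M⁻¹ *ᵥ f x) ≤ ∑ x, w' x * m :=
          Finset.sum_le_sum fun x _ => mul_le_mul_of_nonneg_left (hd x) (hw0 x)
      _ = m := by rw [← Finset.sum_mul, hw1, one_mul]
  have htr_nonneg : 0 ≤ (S * N * S).trace := by
    rw [htrace]
    exact Finset.sum_nonneg fun x _ => mul_nonneg (hw0 x) (hd0 x)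
  have hdetM : 0 < M.det := psd_det_pos hpsd hdet
  have hdetC : (S * N * S).det = N.det * (M.det)⁻¹ := by
    rw [det_mul, det_mul]
    have : S.det * N.det * S.det = N.det * (S * S).det := by rw [det_mul]; ring
    rw [this, hSS, det_nonsing_inv, Ring.inverse_eq_inv']
  have hle1 : (S * N * S).det ≤ 1 := by
    calc (S * N * S).det ≤ ((S * N * S).trace / m) ^ m := psd_det_le_trace_pow hm hC
      _ ≤ 1 ^ m := by
          apply pow_le_pow_left₀ (div_nonneg htr_nonneg (Nat.cast_nonneg m))
          rw [div_le_one (by exact_mod_cast hm)]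
          exact htr_le
      _ = 1 := one_pow m
  rw [hdetC] at hle1
  calc N.det = N.det * (M.det)⁻¹ * M.det := by field_simp
    _ ≤ 1 * M.det := by apply mul_le_mul_of_nonneg_right hle1 hdetM.le
    _ = M.det := one_mul _

lemma sum_shift {m n : ℕ} (f : Fin n → Fin m → ℝ) (w : Fin n → ℝ) (α : ℝ) (u v : Fin n) :
    ∑ x, ((w + α • (Pi.single v 1 - Pi.single u 1) : Fin n → ℝ)) x • vecMulVec (f x) (f x)
      = (∑ x, w x • vecMulVec (f x) (f x))
        + α • vecMulVec (f v) (f v) - α • vecMulVec (f u) (f u) := by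
  simp only [Pi.add_apply, Pi.smul_apply, Pi.sub_apply, Pi.single_apply, smul_eq_mul,
    mul_sub, mul_ite, mul_one, mul_zero, add_smul, sub_smul, ite_smul, zero_smul,
    Finset.sum_add_distrib, Finset.sum_sub_distrib, Finset.sum_ite_eq', Finset.mem_univ,
    if_true]
  abel

/-- Lemma 1, last part: if `w` is not D-optimal and `(u, v)` is a Böhning pair,
then the optimal exchange step is strictly positive and the exchanged design has
strictly larger determinant. -/
theorem bohning_step_increases (m n : ℕ) (f : Fin n → Fin m → ℝ)
    (hspan : Submodule.span ℝ (Set.range f) = ⊤)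
    (w : Fin n → ℝ) (hw0 : ∀ x, 0 ≤ w x) (hw1 : ∑ x, w x = 1)
    (Mfun : (Fin n → ℝ) → Matrix (Fin m) (Fin m) ℝ)
    (hMfun : ∀ w' : Fin n → ℝ, Mfun w' = ∑ x, w' x • vecMulVec (f x) (f x))
    (hreg : (Mfun w).det ≠ 0)
    (hnotopt : ¬ ∀ w' : Fin n → ℝ, (∀ x, 0 ≤ w' x) → ∑ x, w' x = 1 →
      (Mfun w').det ≤ (Mfun w).det)
    (u v : Fin n)
    (hu : 0 < w u ∧ ∀ x, 0 < w x →
      f u ⬝ᵥ (Mfun w)⁻¹.mulVec (f u) ≤ f x ⬝ᵥ (Mfun w)⁻¹.mulVec (f x))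
    (hv : ∀ x, f x ⬝ᵥ (Mfun w)⁻¹.mulVec (f x) ≤ f v ⬝ᵥ (Mfun w)⁻¹.mulVec (f v))
    (αstar : ℝ) (hαmem : αstar ∈ Set.Icc (-(w v)) (w u))
    (hαopt : ∀ α ∈ Set.Icc (-(w v)) (w u),
      (Mfun (w + α • (Pi.single v 1 - Pi.single u 1))).det ≤
        (Mfun (w + αstar • (Pi.single v 1 - Pi.single u 1))).det) :
    0 < αstar ∧
      (Mfun w).det < (Mfun (w + αstar • (Pi.single v 1 - Pi.single u 1))).det := by
  rcases Nat.eq_zero_or_pos m with hm0 | hm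
  · exfalso
    apply hnotopt
    intro w' _ _
    subst hm0
    rw [Subsingleton.elim (Mfun w') (Mfun w)]
  set M := Mfun w with hMdef
  set d : Fin n → ℝ := fun x => f x ⬝ᵥ M⁻¹ *ᵥ f x with hddef
  have hMsum : M = ∑ x, w x • vecMulVec (f x) (f x) := hMfun w
  have hpsd : M.PosSemidef := hMsum ▸ psd_sum f w hw0
  have hdetM : 0 < M.det := psd_det_pos hpsd hreg
  have hunit : IsUnit M.det := isUnit_iff_ne_zero.mpr hreg
  have hMinv : M⁻¹.PosSemidef := hpsd.inv
  have hd0 : ∀ x, 0 ≤ d x := fun x => by simpa using hMinv.dotProduct_mulVec_nonneg (f x)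
  -- ∑ w x * d x = m
  have hkey : (M⁻¹ * ∑ x, w x • vecMulVec (f x) (f x)).trace = ∑ x, w x * d x := by
    have hdist : M⁻¹ * (∑ x, w x • vecMulVec (f x) (f x))
        = ∑ x, w x • (M⁻¹ * vecMulVec (f x) (f x)) := by
      rw [Finset.mul_sum]
      exact Finset.sum_congr rfl fun x _ => (mul_smul_comm _ _ _)
    rw [hdist, trace_sum]
    exact Finset.sum_congr rfl fun x _ => by
      rw [trace_smul, trace_mul_vecMulVec, smul_eq_mul]
  have hsum_d : ∑ x, w x * d x = (m : ℝ) := by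
    rw [← hkey, ← hMsum, nonsing_inv_mul M hunit, trace_one]
    simp
  have hdu : d u ≤ (m : ℝ) := by
    have h1 : ∑ x, w x * d u ≤ ∑ x, w x * d x := by
      refine Finset.sum_le_sum fun x _ => ?_
      rcases (hw0 x).lt_or_eq with hx | hx
      · exact mul_le_mul_of_nonneg_left (hu.2 x hx) (hw0 x)
      · rw [← hx]; simp
    have h2 : ∑ x, w x * d u = d u := by rw [← Finset.sum_mul, hw1, one_mul]
    rw [h2, hsum_d] at h1
    exact h1
  have hdv : (m : ℝ) < d v := by
    by_contra hcon
    push_neg at hcon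
    apply hnotopt
    intro w' h0 h1
    rw [hMfun w']
    exact det_le_of_bounded_d hm f M hpsd hreg (fun x => le_trans (hv x) hcon) w' h0 h1
  set p := f u ⬝ᵥ M⁻¹ *ᵥ f v with hpdef
  set q := f v ⬝ᵥ M⁻¹ *ᵥ f u with hqdef
  have hformula : ∀ α : ℝ, (Mfun (w + α • (Pi.single v 1 - Pi.single u 1))).det
      = M.det * ((1 + α * d v) * (1 - α * d u) + α ^ 2 * p * q) := by
    intro α
    rw [hMfun, sum_shift f w α u v, ← hMsum]
    exact det_rank_two_update M hunit (f v) (f u) α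
  have hCS : p * q ≤ d v * d u := psd_cauchy_schwarz hMinv (f v) (f u)
  set b' : ℝ := d v - d u with hb'def
  set c : ℝ := d v * d u - p * q with hcdef
  have hb' : 0 < b' := by rw [hb'def]; linarith
  have hc : 0 ≤ c := by rw [hcdef]; linarith
  have hgform : ∀ α : ℝ, (1 + α * d v) * (1 - α * d u) + α ^ 2 * p * q
      = 1 + α * b' - α ^ 2 * c := by
    intro α
    rw [hb'def, hcdef]
    ring
  set α0 : ℝ := min (w u) (b' / (c + 1)) with hα0def
  have hα0pos : 0 < α0 := lt_min hu.1 (div_pos hb' (by linarith))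
  have hα0mem : α0 ∈ Set.Icc (-(w v)) (w u) :=
    ⟨by have := hw0 v; linarith, min_le_left _ _⟩
  have hα0le : α0 * (c + 1) ≤ b' := by
    have := min_le_right (w u) (b' / (c + 1))
    calc α0 * (c + 1) ≤ (b' / (c + 1)) * (c + 1) :=
          mul_le_mul_of_nonneg_right this (by linarith)
      _ = b' := by field_simp
  have hgα0 : 1 < 1 + α0 * b' - α0 ^ 2 * c := by nlinarith
  have hα0det : M.det < (Mfun (w + α0 • (Pi.single v 1 - Pi.single u 1))).det := by
    rw [hformula α0, hgform α0]
    nlinarith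
  have hstar_gt : M.det < (Mfun (w + αstar • (Pi.single v 1 - Pi.single u 1))).det :=
    lt_of_lt_of_le hα0det (hαopt α0 hα0mem)
  have hG : 1 < 1 + αstar * b' - αstar ^ 2 * c := by
    rw [hformula αstar, hgform αstar] at hstar_gt
    nlinarith
  have hαpos : 0 < αstar := by
    by_contra hcon
    push_neg at hcon
    have h1 : αstar * b' ≤ 0 := mul_nonpos_of_nonpos_of_nonneg hcon hb'.le
    have h2 : 0 ≤ αstar ^ 2 * c := mul_nonneg (sq_nonneg _) hc
    linarith
  exact ⟨hαpos, hstar_gt⟩
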